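/- arXiv:math/0601206 — 4 statements merged into one kernel-verified Lean document; each statement's English description precedes it below -/
import Mathlib

section
/- Let n ≥ 1 and let m_0, m_1, …, m_n be positive real numbers satisfying m_i ≥ √(m_{i-1} · m_{i+1}) for all i = 1, …, n−1. Then every admissible collision sequence has length at most n(n+1)/2; that is, if v^(0), v^(1), …, v^(N) is a sequence of vectors in ℝ^{n+1} such that for each t < N there is an index i (1 ≤ i ≤ n) with v^(t)_{i-1} > v^(t)_i and v^(t+1) is obtained from v^(t) by the elastic collision between balls i−1 and i, then N ≤ n(n+1)/2. -/
/-- The elastic collision between balls `i - 1` and `i` (for `1 ≤ i ≤ n`):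
the velocities `v (i-1)`, `v i` are replaced according to conservation of
momentum and energy, all other velocities are unchanged. -/
noncomputable def collide {n : ℕ} (m : Fin (n + 1) → ℝ) (i : Fin (n + 1))
    (v : Fin (n + 1) → ℝ) : Fin (n + 1) → ℝ := fun j =>
  if j = i - 1 then
    ((m (i - 1) - m i) * v (i - 1) + 2 * m i * v i) / (m (i - 1) + m i)
  else if j = i then
    (2 * m (i - 1) * v (i - 1) + (m i - m (i - 1)) * v i) / (m (i - 1) + m i)
  else v j

/-!
Put `p j = √(m j m (j+1) / (m j + m (j+1))) * (v (j+1) - v j)`. In the coordinates `√(m k) * v k`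
collisions are reflections and `p j` is the signed distance to the mirror of collision `j`, so a
collision at `a` (admissible iff `p a < 0`) negates `p a` and adds `θ * p a` to `p (a ± 1)`;
the geometric-mean condition says exactly that `θ ≤ 1`. With `θ = 1` the collision would just
swap `S a` and `S (a+1)` in the partial sums `S k = p 0 + ⋯ + p (k-1)`, removing the inversion
`(a, a+1)` of `S 0, …, S n`; with `θ ≤ 1` the increments of `S` only get larger, which creates
no inversion. Hence every collision lowers the number of inversions, which is at most
`(n+1).choose 2`.
-/

open Finset

section Inversions

variable {α : Type*} [LinearOrder α]

def inversions (M : ℕ) (x : ℕ → α) : Finset (ℕ × ℕ) :=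
  {q ∈ range M ×ˢ range M | q.1 < q.2 ∧ x q.2 < x q.1}

lemma mem_inversions {M : ℕ} {x : ℕ → α} {q : ℕ × ℕ} :
    q ∈ inversions M x ↔ q.2 < M ∧ q.1 < q.2 ∧ x q.2 < x q.1 := by
  simp only [inversions, mem_filter, mem_product, mem_range]
  constructor
  · rintro ⟨⟨-, h⟩, h'⟩
    exact ⟨h, h'⟩
  · rintro ⟨h, h'⟩
    exact ⟨⟨h'.1.trans h, h⟩, h'⟩

lemma card_inversions_le_choose (M : ℕ) (x : ℕ → α) : #(inversions M x) ≤ M.choose 2 :=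
  calc #(inversions M x) ≤ #{q ∈ range M ×ˢ range M | q.1 < q.2} :=
        card_le_card fun q hq => by
          simp only [inversions, mem_filter] at hq ⊢
          exact ⟨hq.1, hq.2.1⟩
    _ = M.choose 2 := by rw [card_product_filter_lt, card_range]

lemma swap_lt_swap_of_lt {a k l : ℕ} (hkl : k < l) (hne : (k, l) ≠ (a, a + 1)) :
    Equiv.swap a (a + 1) k < Equiv.swap a (a + 1) l := by
  simp only [ne_eq, Prod.mk.injEq] at hne
  simp only [Equiv.swap_apply_def]
  split_ifs <;> omega

/-- Swapping an adjacent inverted pair removes that inversion and permutes the others. -/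
lemma card_inversions_comp_swap_lt {M a : ℕ} {x : ℕ → α} (ha : a + 1 < M)
    (hx : x (a + 1) < x a) :
    #(inversions M (x ∘ Equiv.swap a (a + 1))) < #(inversions M x) := by
  set σ := Equiv.swap a (a + 1)
  have hmem : (a, a + 1) ∈ inversions M x := mem_inversions.2 ⟨ha, a.lt_succ_self, hx⟩
  calc #(inversions M (x ∘ σ)) ≤ #((inversions M x).erase (a, a + 1)) := by
        refine card_le_card_of_injOn (Prod.map σ σ) (fun q hq => ?_)
          (Prod.map_injective.2 ⟨σ.injective, σ.injective⟩).injOn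
        obtain ⟨hq2, hq12, hxq⟩ := mem_inversions.1 hq
        have hne : q ≠ (a, a + 1) := by
          rintro rfl
          simp only [Function.comp_apply, σ, Equiv.swap_apply_left,
            Equiv.swap_apply_right] at hxq
          exact hxq.not_gt hx
        have hσ2 : σ q.2 < M := by
          simp only [σ, Equiv.swap_apply_def]; split_ifs <;> omega
        refine mem_erase.2 ⟨fun h => ?_, mem_inversions.2 ⟨hσ2, swap_lt_swap_of_lt hq12 hne, hxq⟩⟩
        simp only [Prod.map, Prod.mk.injEq, σ, Equiv.swap_apply_eq_iff, Equiv.swap_apply_left,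
          Equiv.swap_apply_right] at h
        omega
    _ < #(inversions M x) := card_erase_lt_of_mem hmem

end Inversions

section PartialSums

variable {α : Type*} [AddCommGroup α] [LinearOrder α] [IsOrderedAddMonoid α]

lemma sub_le_sub_of_succ_sub_le {M : ℕ} {x y : ℕ → α}
    (h : ∀ k, k + 1 < M → x (k + 1) - x k ≤ y (k + 1) - y k) {k l : ℕ} (hkl : k ≤ l)
    (hl : l < M) : x l - x k ≤ y l - y k := by
  induction l, hkl using Nat.le_induction with
  | base => simp
  | succ l hkl ih =>
    calc x (l + 1) - x k = (x (l + 1) - x l) + (x l - x k) := by abel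
      _ ≤ (y (l + 1) - y l) + (y l - y k) := add_le_add (h l hl) (ih (by omega))
      _ = y (l + 1) - y k := by abel

lemma inversions_subset_of_succ_sub_le {M : ℕ} {x y : ℕ → α}
    (h : ∀ k, k + 1 < M → x (k + 1) - x k ≤ y (k + 1) - y k) :
    inversions M y ⊆ inversions M x := fun q hq => by
  obtain ⟨hq2, hq12, hyq⟩ := mem_inversions.1 hq
  refine mem_inversions.2 ⟨hq2, hq12, sub_neg.1 ?_⟩
  exact (sub_le_sub_of_succ_sub_le h hq12.le hq2).trans_lt (sub_neg.2 hyq)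

/-- The partial sums of `q` have at least the increments of those of `p` with the entries
`a` and `a + 1` swapped. -/
lemma card_inversions_partialSums_lt {n a : ℕ} {p q : ℕ → α} (ha : a < n) (hpa : p a < 0)
    (hqa : q a = -p a) (hprev : 0 < a → p (a - 1) + p a ≤ q (a - 1))
    (hnext : a + 1 < n → p a + p (a + 1) ≤ q (a + 1))
    (hfar : ∀ j < n, j + 1 ≠ a → j ≠ a → j ≠ a + 1 → q j = p j) :
    #(inversions (n + 1) fun k => ∑ j ∈ range k, q j) <
      #(inversions (n + 1) fun k => ∑ j ∈ range k, p j) := by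
  set S : ℕ → α := fun k => ∑ j ∈ range k, p j
  have hincr : ∀ j, j + 1 < n + 1 → (S ∘ Equiv.swap a (a + 1)) (j + 1) -
      (S ∘ Equiv.swap a (a + 1)) j ≤ ∑ i ∈ range (j + 1), q i - ∑ i ∈ range j, q i := by
    intro j hj
    rw [sum_range_succ_sub_sum]
    obtain rfl | rfl | rfl | ⟨h1, h2, h3⟩ :
        j + 1 = a ∨ j = a ∨ j = a + 1 ∨ (j + 1 ≠ a ∧ j ≠ a ∧ j ≠ a + 1) := by omega
    · simpa [S, Equiv.swap_apply_of_ne_of_ne, sum_range_succ, add_assoc] using hprev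
    · simp [S, sum_range_succ, hqa]
    · simpa [S, Equiv.swap_apply_of_ne_of_ne, sum_range_succ, add_assoc] using hnext (by omega)
    · rw [hfar j (by omega) h1 h2 h3]
      simp [S, Equiv.swap_apply_of_ne_of_ne, sum_range_succ, h1, h2, h3]
  calc _ ≤ #(inversions (n + 1) (S ∘ Equiv.swap a (a + 1))) :=
        card_le_card (inversions_subset_of_succ_sub_le hincr)
    _ < #(inversions (n + 1) S) :=
        card_inversions_comp_swap_lt (by omega) (by simpa [S, sum_range_succ] using hpa)

end PartialSums

noncomputable def sqrtReducedMass (x y : ℝ) : ℝ := √(x * y / (x + y))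

lemma sqrtReducedMass_comm (x y : ℝ) : sqrtReducedMass x y = sqrtReducedMass y x := by
  rw [sqrtReducedMass, sqrtReducedMass, mul_comm, add_comm]

lemma sqrtReducedMass_pos {x y : ℝ} (hx : 0 < x) (hy : 0 < y) : 0 < sqrtReducedMass x y :=
  Real.sqrt_pos.2 (by positivity)

lemma four_mul_le_of_sqrt_mul_le {x y z : ℝ} (hx : 0 ≤ x) (hz : 0 ≤ z) (h : √(x * z) ≤ y) :
    4 * (x * z) ≤ (x + y) * (y + z) := by
  set s := √(x * z)
  have hs : 0 ≤ s := Real.sqrt_nonneg _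
  have hs2 : s ^ 2 = x * z := Real.sq_sqrt (mul_nonneg hx hz)
  have hamgm : 2 * s ≤ x + z := by nlinarith [sq_nonneg (x - z)]
  nlinarith [mul_le_mul h h hs (hs.trans h)]

/-- The geometric-mean condition `y ≥ √(x z)` bounds the reflection coefficient by one. -/
lemma sqrtReducedMass_mul_two_le {x y z : ℝ} (hx : 0 < x) (hy : 0 < y) (hz : 0 < z)
    (h : √(x * z) ≤ y) : sqrtReducedMass x y * (2 * z) ≤ sqrtReducedMass y z * (y + z) := by
  have key := four_mul_le_of_sqrt_mul_le hx.le hz.le h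
  rw [sqrtReducedMass, sqrtReducedMass,
    ← pow_le_pow_iff_left₀ (by positivity) (by positivity) two_ne_zero, mul_pow, mul_pow (√_),
    Real.sq_sqrt (by positivity), Real.sq_sqrt (by positivity)]
  rw [div_mul_eq_mul_div, div_mul_eq_mul_div, div_le_div_iff₀ (by positivity) (by positivity)]
  nlinarith [mul_le_mul_of_nonneg_left key (by positivity : 0 ≤ y * z * (y + z))]

/-- `collide` with balls indexed by `ℕ` and the collision labelled by its left ball `a`. -/
noncomputable def collideNat (μ : ℕ → ℝ) (a : ℕ) (w : ℕ → ℝ) (k : ℕ) : ℝ :=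
  if k = a then ((μ a - μ (a + 1)) * w a + 2 * μ (a + 1) * w (a + 1)) / (μ a + μ (a + 1))
  else if k = a + 1 then (2 * μ a * w a + (μ (a + 1) - μ a) * w (a + 1)) / (μ a + μ (a + 1))
  else w k

noncomputable def scaledRelVel (μ w : ℕ → ℝ) (j : ℕ) : ℝ :=
  sqrtReducedMass (μ j) (μ (j + 1)) * (w (j + 1) - w j)

section Collision

variable {μ w : ℕ → ℝ} {a : ℕ}

lemma collideNat_left (hμ : μ a + μ (a + 1) ≠ 0) :
    collideNat μ a w a = w a + 2 * μ (a + 1) / (μ a + μ (a + 1)) * (w (a + 1) - w a) := by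
  rw [collideNat, if_pos rfl]
  field_simp
  ring

lemma collideNat_right (hμ : μ a + μ (a + 1) ≠ 0) :
    collideNat μ a w (a + 1) = w (a + 1) - 2 * μ a / (μ a + μ (a + 1)) * (w (a + 1) - w a) := by
  rw [collideNat, if_neg (by omega), if_pos rfl]
  field_simp
  ring

lemma collideNat_of_ne {k : ℕ} (h₁ : k ≠ a) (h₂ : k ≠ a + 1) : collideNat μ a w k = w k := by
  rw [collideNat, if_neg h₁, if_neg h₂]

lemma scaledRelVel_collideNat_self (hμ : μ a + μ (a + 1) ≠ 0) :
    scaledRelVel μ (collideNat μ a w) a = -scaledRelVel μ w a := by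
  rw [scaledRelVel, scaledRelVel, collideNat_left hμ, collideNat_right hμ]
  field_simp
  ring

lemma scaledRelVel_collideNat_of_ne {j : ℕ} (h₁ : j + 1 ≠ a) (h₂ : j ≠ a) (h₃ : j ≠ a + 1) :
    scaledRelVel μ (collideNat μ a w) j = scaledRelVel μ w j := by
  rw [scaledRelVel, scaledRelVel, collideNat_of_ne h₂ h₃, collideNat_of_ne h₁ (by omega)]

lemma scaledRelVel_collideNat_prev (hμ : ∀ k, 0 < μ k) (hw : w (a + 1) < w a) (ha : 0 < a)
    (hgeo : √(μ (a - 1) * μ (a + 1)) ≤ μ a) :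
    scaledRelVel μ w (a - 1) + scaledRelVel μ w a ≤ scaledRelVel μ (collideNat μ a w) (a - 1) := by
  have hM : 0 < μ a + μ (a + 1) := add_pos (hμ _) (hμ _)
  have hθ : sqrtReducedMass (μ (a - 1)) (μ a) * (2 * μ (a + 1)) / (μ a + μ (a + 1)) ≤
      sqrtReducedMass (μ a) (μ (a + 1)) :=
    (div_le_iff₀ hM).2 (sqrtReducedMass_mul_two_le (hμ _) (hμ _) (hμ _) hgeo)
  have := mul_le_mul_of_nonpos_right hθ (sub_nonpos.2 hw.le)
  simp only [scaledRelVel, Nat.sub_add_cancel ha]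
  rw [collideNat_of_ne (k := a - 1) (by omega) (by omega), collideNat_left hM.ne']
  linear_combination this

lemma scaledRelVel_collideNat_next (hμ : ∀ k, 0 < μ k) (hw : w (a + 1) < w a)
    (hgeo : √(μ a * μ (a + 2)) ≤ μ (a + 1)) :
    scaledRelVel μ w a + scaledRelVel μ w (a + 1) ≤ scaledRelVel μ (collideNat μ a w) (a + 1) := by
  have hM : 0 < μ a + μ (a + 1) := add_pos (hμ _) (hμ _)
  have hθ : sqrtReducedMass (μ (a + 1)) (μ (a + 2)) * (2 * μ a) / (μ a + μ (a + 1)) ≤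
      sqrtReducedMass (μ a) (μ (a + 1)) := by
    rw [div_le_iff₀ hM, sqrtReducedMass_comm, sqrtReducedMass_comm (μ a), add_comm (μ a)]
    exact sqrtReducedMass_mul_two_le (hμ _) (hμ _) (hμ _) (by rwa [mul_comm])
  have := mul_le_mul_of_nonpos_right hθ (sub_nonpos.2 hw.le)
  simp only [scaledRelVel]
  rw [collideNat_of_ne (k := a + 1 + 1) (by omega) (by omega), collideNat_right hM.ne']
  linear_combination this

end Collision

lemma card_inversions_collideNat_lt {n a : ℕ} {μ w w' : ℕ → ℝ} (hμ : ∀ k, 0 < μ k)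
    (hgeo : ∀ j, j + 2 ≤ n → √(μ j * μ (j + 2)) ≤ μ (j + 1)) (ha : a < n)
    (hw : w (a + 1) < w a) (hw' : ∀ k ≤ n, w' k = collideNat μ a w k) :
    #(inversions (n + 1) fun k => ∑ j ∈ range k, scaledRelVel μ w' j) <
      #(inversions (n + 1) fun k => ∑ j ∈ range k, scaledRelVel μ w j) := by
  have hw'' : ∀ j < n, scaledRelVel μ w' j = scaledRelVel μ (collideNat μ a w) j := fun j hj => by
    rw [scaledRelVel, scaledRelVel, hw' j hj.le, hw' (j + 1) hj]
  have hM : μ a + μ (a + 1) ≠ 0 := (add_pos (hμ _) (hμ _)).ne'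
  refine card_inversions_partialSums_lt ha
    (mul_neg_of_pos_of_neg (sqrtReducedMass_pos (hμ _) (hμ _)) (sub_neg.2 hw))
    (by rw [hw'' a ha, scaledRelVel_collideNat_self hM]) (fun ha₀ => ?_) (fun ha₁ => ?_)
    (fun j hj h₁ h₂ h₃ => by rw [hw'' j hj, scaledRelVel_collideNat_of_ne h₁ h₂ h₃])
  · rw [hw'' (a - 1) (by omega)]
    exact scaledRelVel_collideNat_prev hμ hw ha₀
      (by simpa [show a - 1 + 2 = a + 1 by omega, Nat.sub_add_cancel ha₀] using
        hgeo (a - 1) (by omega))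
  · rw [hw'' (a + 1) ha₁]
    exact scaledRelVel_collideNat_next hμ hw (hgeo a ha₁)

lemma le_apply_zero_of_succ_lt {f : ℕ → ℕ} {N : ℕ} (h : ∀ t < N, f (t + 1) < f t) : N ≤ f 0 := by
  suffices ∀ t ≤ N, t + f t ≤ f 0 from (N.le_add_right _).trans (this N le_rfl)
  intro t ht
  induction t with
  | zero => simp
  | succ t ih => have := h t ht; have := ih (by omega); omega

open Fin.NatCast

lemma Fin.natCast_succ_sub_one (n a : ℕ) : ((a + 1 : ℕ) : Fin (n + 1)) - 1 = a := by
  push_cast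
  exact add_sub_cancel_right _ _

lemma collide_natCast {n a k : ℕ} (m w : Fin (n + 1) → ℝ) (ha : a < n) (hk : k ≤ n) :
    collide m ((a + 1 : ℕ) : Fin (n + 1)) w k = collideNat (fun j => m j) a (fun j => w j) k := by
  have hinj : ∀ j ≤ n, ((k : Fin (n + 1)) = j ↔ k = j) := fun j hj => by
    rw [Fin.ext_iff, Fin.val_cast_of_lt (by omega), Fin.val_cast_of_lt (by omega)]
  simp only [collide, collideNat, Fin.natCast_succ_sub_one, hinj a ha.le, hinj (a + 1) ha]

theorem max_collisions_of_geometric_mean_condition_general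
    (n : ℕ) (m : Fin (n + 1) → ℝ)
    (hm : ∀ i, 0 < m i)
    (hmass : ∀ i : Fin (n + 1), 1 ≤ (i : ℕ) → (i : ℕ) ≤ n - 1 →
      Real.sqrt (m (i - 1) * m (i + 1)) ≤ m i)
    (N : ℕ) (v : ℕ → Fin (n + 1) → ℝ)
    (hstep : ∀ t < N, ∃ i : Fin (n + 1), 1 ≤ (i : ℕ) ∧
      v t i < v t (i - 1) ∧ v (t + 1) = collide m i (v t)) :
    N ≤ n * (n + 1) / 2 := by
  set μ : ℕ → ℝ := fun k => m k
  have hgeo : ∀ j, j + 2 ≤ n → √(μ j * μ (j + 2)) ≤ μ (j + 1) := fun j hj => by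
    have hval : (((j + 1 : ℕ) : Fin (n + 1)) : ℕ) = j + 1 := Fin.val_cast_of_lt (by omega)
    have := hmass (j + 1 : ℕ) (by omega) (by omega)
    rw [Fin.natCast_succ_sub_one] at this
    convert this using 4
    push_cast
    rw [add_assoc, one_add_one_eq_two]
  let Φ : ℕ → ℕ := fun t =>
    #(inversions (n + 1) fun k => ∑ j ∈ range k, scaledRelVel μ (fun k => v t k) j)
  have hΦ : ∀ t < N, Φ (t + 1) < Φ t := fun t ht => by
    obtain ⟨i, hi, hlt, hcol⟩ := hstep t ht
    obtain ⟨a, ha, rfl⟩ : ∃ a < n, i = ((a + 1 : ℕ) : Fin (n + 1)) :=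
      ⟨i - 1, by omega, by rw [Nat.sub_add_cancel hi, Fin.cast_val_eq_self]⟩
    rw [Fin.natCast_succ_sub_one] at hlt
    exact card_inversions_collideNat_lt (fun k => hm k) hgeo ha hlt fun k hk => by
      rw [hcol, collide_natCast m _ ha hk]
  calc N ≤ Φ 0 := le_apply_zero_of_succ_lt hΦ
    _ ≤ (n + 1).choose 2 := card_inversions_le_choose _ _
    _ = n * (n + 1) / 2 := by rw [Nat.choose_two_right, mul_comm]; rfl

/-- If every interior mass is at least the geometric mean of the masses of its
immediate neighbors, then any admissible collision sequence of the `n + 1`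
hard balls has length at most `n (n + 1) / 2`. -/
theorem max_collisions_of_geometric_mean_condition
    (n : ℕ) (hn : 1 ≤ n) (m : Fin (n + 1) → ℝ)
    (hm : ∀ i, 0 < m i)
    (hmass : ∀ i : Fin (n + 1), 1 ≤ (i : ℕ) → (i : ℕ) ≤ n - 1 →
      Real.sqrt (m (i - 1) * m (i + 1)) ≤ m i)
    (N : ℕ) (v : ℕ → Fin (n + 1) → ℝ)
    (hstep : ∀ t < N, ∃ i : Fin (n + 1), 1 ≤ (i : ℕ) ∧
      v t i < v t (i - 1) ∧ v (t + 1) = collide m i (v t)) :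
    N ≤ n * (n + 1) / 2 :=
  max_collisions_of_geometric_mean_condition_general n m hm hmass N v hstep
end

section
/- Let n ≥ 1 and let m_0, m_1, …, m_n be positive real numbers satisfying m_i ≥ (m_{i-1} + m_{i+1})/2 for all i = 1, …, n−1 (the Murphy–Cohen condition). Then every admissible collision sequence has length at most n(n+1)/2; that is, if v^(0), v^(1), …, v^(N) is a sequence of vectors in ℝ^{n+1} such that for each t < N there is an index i (1 ≤ i ≤ n) with v^(t)_{i-1} > v^(t)_i and v^(t+1) is obtained from v^(t) by the elastic collision between balls i−1 and i, then N ≤ n(n+1)/2. -/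
/-!
Weight the gaps by `w₀ = 1`, `w_{j+1} = w_j · 2 μ_{j+1} / (μ_j + μ_{j+1})` and attach to every
position `k` the potential `S_k = -v₀ + ∑_{j<k} w_{j+1} (v_j - v_{j+1})`. A collision between
balls `p` and `p + 1` exchanges `S_p` and `S_{p+1}`, leaves `S_k` unchanged for `k < p`, and
lowers all `S_k` with `k > p + 1` by one common amount, which is nonnegative by the
Murphy–Cohen condition. Label the potentials and record their positions by a permutation. Every
collision swaps two adjacent labels, and for every inverted pair of labels the one now on the left
keeps the strictly larger potential. Since the colliding pair has `S_p < S_{p+1}`, it was not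
inverted, so each collision creates exactly one new inversion and destroys none; there are at most
`(n + 1).choose 2` inversions.
-/

open Finset Equiv

namespace Equiv.Perm

variable {α : Type*} [LinearOrder α] [Fintype α]

def inversions (σ : Perm α) : Finset (α × α) := {q | q.1 < q.2 ∧ σ q.2 < σ q.1}

@[simp]
theorem mem_inversions {σ : Perm α} {q : α × α} :
    q ∈ σ.inversions ↔ q.1 < q.2 ∧ σ q.2 < σ q.1 := by
  simp [inversions]

@[simp]
theorem inversions_one : (1 : Perm α).inversions = ∅ := by
  ext q
  simpa using le_of_lt

theorem card_inversions_le (σ : Perm α) : #σ.inversions ≤ (Fintype.card α).choose 2 := by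
  rw [← card_univ, ← card_product_filter_lt, univ_product_univ]
  exact card_le_card fun q hq => by simpa using (mem_inversions.1 hq).1

omit [Fintype α] in
theorem swap_apply_lt_swap_apply_iff {x y u w : α} (hxy : x ⋖ y) (h : ¬(u = x ∧ w = y))
    (h' : ¬(u = y ∧ w = x)) : swap x y u < swap x y w ↔ u < w := by
  have lt_iff {z} (hx : z ≠ x) (hy : z ≠ y) : x < z ↔ y < z :=
    ⟨fun hz => (hxy.ge_of_gt hz).lt_of_ne' hy, hxy.lt.trans⟩
  have gt_iff {z} (hx : z ≠ x) (hy : z ≠ y) : z < x ↔ z < y :=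
    ⟨(·.trans hxy.lt), fun hz => (hxy.le_of_lt hz).lt_of_ne hx⟩
  rw [swap_apply_def, swap_apply_def]
  split_ifs <;> subst_vars <;> simp_all

variable {σ : Perm α} {x y : α}

theorem inversions_swap_mul (hxy : x ⋖ y) (h : σ.symm x < σ.symm y) :
    (swap x y * σ).inversions = insert (σ.symm x, σ.symm y) σ.inversions := by
  ext ⟨a, b⟩
  simp only [mem_insert, mem_inversions, Perm.mul_apply, Prod.mk.injEq]
  by_cases hab : a = σ.symm x ∧ b = σ.symm y
  · obtain ⟨rfl, rfl⟩ := hab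
    simp [h, hxy.lt]
  by_cases hba : a = σ.symm y ∧ b = σ.symm x
  · obtain ⟨rfl, rfl⟩ := hba
    simp [h.not_gt, hxy.lt.ne']
  rw [swap_apply_lt_swap_apply_iff hxy]
  · tauto
  all_goals simp only [← eq_symm_apply]; tauto

theorem card_inversions_swap_mul (hxy : x ⋖ y) (h : σ.symm x < σ.symm y) :
    #(swap x y * σ).inversions = #σ.inversions + 1 := by
  rw [inversions_swap_mul hxy h, card_insert_of_notMem]
  simp [hxy.lt.le]

end Equiv.Perm

namespace Fin

variable {n : ℕ}

theorem castSucc_covBy_succ (p : Fin n) : p.castSucc ⋖ p.succ :=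
  ⟨p.castSucc_lt_succ, fun c h1 h2 => by simp [Fin.lt_def] at h1 h2; omega⟩

theorem succ_sub_one (p : Fin n) : p.succ - 1 = p.castSucc := by
  ext
  simp [Fin.coe_sub_one]

end Fin

namespace Collision

variable (μ : ℕ → ℝ)

noncomputable def weight : ℕ → ℝ
  | 0 => 1
  | j + 1 => weight j * (2 * μ (j + 1) / (μ j + μ (j + 1)))

/-- Summation by parts of `-v 0 + ∑ j < k, weight μ (j + 1) * (v j - v (j + 1))`
(see `potential_succ`), so that `v k` enters only through the last term. -/
noncomputable def potential (v : ℕ → ℝ) (k : ℕ) : ℝ :=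
  ∑ j ∈ range k, (weight μ (j + 1) - weight μ j) * v j - weight μ k * v k

/-- `collide` for velocity sequences indexed by `ℕ`, between the balls `p` and `p + 1`. -/
noncomputable def bounce (p : ℕ) (v : ℕ → ℝ) : ℕ → ℝ := fun k =>
  if k = p then ((μ p - μ (p + 1)) * v p + 2 * μ (p + 1) * v (p + 1)) / (μ p + μ (p + 1))
  else if k = p + 1 then (2 * μ p * v p + (μ (p + 1) - μ p) * v (p + 1)) / (μ p + μ (p + 1))
  else v k

noncomputable def drop (p : ℕ) : ℝ :=
  weight μ (p + 1) - 2 * μ p / (μ p + μ (p + 1)) * weight μ (p + 2)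

variable {μ}

theorem weight_pos (hμ : ∀ k, 0 < μ k) (j : ℕ) : 0 < weight μ j := by
  induction j with
  | zero => exact one_pos
  | succ j ih =>
    have := hμ j
    have := hμ (j + 1)
    exact mul_pos ih (by positivity)

theorem drop_nonneg (hμ : ∀ k, 0 < μ k) {p : ℕ} (h : μ p + μ (p + 2) ≤ 2 * μ (p + 1)) :
    0 ≤ drop μ p := by
  have h0 := hμ p
  have h1 := hμ (p + 1)
  have h2 := hμ (p + 2)
  have key : 4 * μ p * μ (p + 2) ≤ (μ p + μ (p + 1)) * (μ (p + 1) + μ (p + 2)) := by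
    nlinarith [sq_nonneg (μ p - μ (p + 2))]
  have hw : weight μ (p + 2) = weight μ (p + 1) * (2 * μ (p + 2) / (μ (p + 1) + μ (p + 2))) :=
    rfl
  have hdrop : drop μ p = weight μ (p + 1) *
      ((μ p + μ (p + 1)) * (μ (p + 1) + μ (p + 2)) - 4 * μ p * μ (p + 2)) /
        ((μ p + μ (p + 1)) * (μ (p + 1) + μ (p + 2))) := by
    rw [drop, hw]
    field_simp
    ring
  rw [hdrop]
  exact div_nonneg (mul_nonneg (weight_pos hμ _).le (sub_nonneg.2 key)) (by positivity)

theorem potential_succ (v : ℕ → ℝ) (k : ℕ) :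
    potential μ v (k + 1) = potential μ v k + weight μ (k + 1) * (v k - v (k + 1)) := by
  rw [potential, potential, sum_range_succ]
  ring

theorem potential_eq_of_eqOn_lt {v v' : ℕ → ℝ} {k : ℕ} (h : ∀ j < k, v' j = v j) :
    potential μ v' k = potential μ v k + weight μ k * (v k - v' k) := by
  rw [potential, potential, sum_congr rfl fun j hj => by rw [h j (mem_range.1 hj)]]
  ring

section Bounce

variable {p : ℕ} (v : ℕ → ℝ)

theorem bounce_apply_self :
    bounce μ p v p =
      ((μ p - μ (p + 1)) * v p + 2 * μ (p + 1) * v (p + 1)) / (μ p + μ (p + 1)) :=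
  if_pos rfl

theorem bounce_apply_succ :
    bounce μ p v (p + 1) =
      (2 * μ p * v p + (μ (p + 1) - μ p) * v (p + 1)) / (μ p + μ (p + 1)) := by
  simp [bounce]

theorem bounce_apply_of_lt {k : ℕ} (hk : k < p) : bounce μ p v k = v k := by
  simp [bounce, hk.ne, (hk.trans p.lt_succ_self).ne]

theorem bounce_apply_of_gt {k : ℕ} (hk : p + 1 < k) : bounce μ p v k = v k := by
  simp [bounce, hk.ne', (p.lt_succ_self.trans hk).ne']

theorem potential_bounce_of_lt {k : ℕ} (hk : k < p) :
    potential μ (bounce μ p v) k = potential μ v k := by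
  rw [potential_eq_of_eqOn_lt fun j hj => bounce_apply_of_lt v (hj.trans hk),
    bounce_apply_of_lt v hk, sub_self, mul_zero, add_zero]

variable (hM : μ p + μ (p + 1) ≠ 0)
include hM

theorem potential_bounce_self : potential μ (bounce μ p v) p = potential μ v (p + 1) := by
  rw [potential_eq_of_eqOn_lt fun j hj => bounce_apply_of_lt v hj, potential_succ,
    weight, bounce_apply_self]
  field_simp
  ring

theorem potential_bounce_succ : potential μ (bounce μ p v) (p + 1) = potential μ v p := by
  rw [potential_succ, potential_bounce_self v hM, potential_succ, bounce_apply_self,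
    bounce_apply_succ]
  field_simp
  ring

theorem potential_bounce_of_gt {k : ℕ} (hk : p + 1 < k) :
    potential μ (bounce μ p v) k = potential μ v k - drop μ p * (v p - v (p + 1)) := by
  induction k, hk using Nat.le_induction with
  | base =>
    rw [potential_succ, potential_bounce_succ v hM, potential_succ, potential_succ,
      bounce_apply_of_gt v (lt_add_one _), drop, bounce_apply_succ]
    field_simp
    ring
  | succ k hk ih =>
    rw [potential_succ, ih, potential_succ, bounce_apply_of_gt v hk,
      bounce_apply_of_gt v (by omega)]
    ring

theorem potential_bounce_swap (k : ℕ) :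
    potential μ (bounce μ p v) (swap p (p + 1) k) =
      potential μ v k - if p + 1 < k then drop μ p * (v p - v (p + 1)) else 0 := by
  rcases lt_trichotomy k p with hk | rfl | hk
  · rw [swap_apply_of_ne_of_ne hk.ne (by omega), potential_bounce_of_lt v hk,
      if_neg (by omega), sub_zero]
  · rw [swap_apply_left, potential_bounce_succ v hM, if_neg (by omega), sub_zero]
  rcases (Nat.succ_le_of_lt hk).eq_or_lt with rfl | hk
  · rw [swap_apply_right, potential_bounce_self v hM, if_neg (by omega), sub_zero]
  · rw [swap_apply_of_ne_of_ne (by omega) hk.ne', potential_bounce_of_gt v hM hk, if_pos hk]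

end Bounce

section Ordered

variable {n : ℕ}

/-- `σ` sends the labels to the positions `0, …, n`. -/
def PotentialOrdered (μ : ℕ → ℝ) (v : ℕ → ℝ) (σ : Perm (Fin (n + 1))) : Prop :=
  ∀ q ∈ σ.inversions, potential μ v (σ q.1) < potential μ v (σ q.2)

variable {σ : Perm (Fin (n + 1))} {v : ℕ → ℝ} {p : Fin n}

theorem PotentialOrdered.symm_castSucc_lt_symm_succ (hσ : PotentialOrdered μ v σ)
    (hμ : ∀ k, 0 < μ k) (hv : v (p + 1) < v p) : σ.symm p.castSucc < σ.symm p.succ := by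
  by_contra! h
  have hinv : (σ.symm p.succ, σ.symm p.castSucc) ∈ σ.inversions := by
    simp [h.lt_of_ne (by simp [p.castSucc_lt_succ.ne']), p.castSucc_lt_succ]
  have := hσ _ hinv
  simp only [apply_symm_apply, Fin.val_succ, Fin.val_castSucc, potential_succ] at this
  nlinarith [weight_pos hμ (p + 1)]

theorem PotentialOrdered.bounce (hσ : PotentialOrdered μ v σ) (hμ : ∀ k, 0 < μ k)
    (hmass : (p : ℕ) + 2 ≤ n → μ p + μ (p + 2) ≤ 2 * μ (p + 1)) (hv : v (p + 1) < v p) :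
    PotentialOrdered μ (bounce μ p v) (swap p.castSucc p.succ * σ) := by
  have hM : μ p + μ (p + 1) ≠ 0 := (add_pos (hμ _) (hμ _)).ne'
  intro q hq
  rw [Perm.inversions_swap_mul p.castSucc_covBy_succ (hσ.symm_castSucc_lt_symm_succ hμ hv),
    mem_insert] at hq
  rcases hq with rfl | hq
  · simp only [Perm.mul_apply, apply_symm_apply, swap_apply_left, swap_apply_right,
      Fin.val_succ, Fin.val_castSucc, potential_bounce_self v hM, potential_bounce_succ v hM,
      potential_succ]
    nlinarith [weight_pos hμ (p + 1)]
  have hval (x : Fin (n + 1)) :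
      ((swap p.castSucc p.succ x : Fin (n + 1)) : ℕ) = swap (p : ℕ) (p + 1) x := by
    simpa using (Fin.val_injective.swap_apply p.castSucc p.succ x).symm
  have hpot := hσ q hq
  have hlt : (σ q.2 : ℕ) < σ q.1 := (Perm.mem_inversions.1 hq).2
  have hle : (σ q.1 : ℕ) ≤ n := Nat.lt_succ_iff.1 (σ q.1).isLt
  have hd : 0 < v p - v (p + 1) := sub_pos.2 hv
  simp only [Perm.mul_apply, hval, potential_bounce_swap v hM]
  split_ifs with h1 h2 h2
  · linarith
  · nlinarith [drop_nonneg hμ (hmass (by omega))]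
  · omega
  · linarith

end Ordered

theorem card_le_choose_of_bounce {n N : ℕ} (hμ : ∀ k, 0 < μ k)
    (hmass : ∀ p, p + 2 ≤ n → μ p + μ (p + 2) ≤ 2 * μ (p + 1)) (V : ℕ → ℕ → ℝ)
    (hstep : ∀ t < N, ∃ p : Fin n, V t (p + 1) < V t p ∧ V (t + 1) = bounce μ p (V t)) :
    N ≤ (n + 1).choose 2 := by
  have key : ∀ t ≤ N, ∃ σ : Perm (Fin (n + 1)),
      #σ.inversions = t ∧ PotentialOrdered μ (V t) σ := by
    intro t
    induction t with
    | zero => exact fun _ => ⟨1, by simp, by simp [PotentialOrdered]⟩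
    | succ t ih =>
      intro ht
      obtain ⟨σ, hcard, hσ⟩ := ih (by omega)
      obtain ⟨p, hv, hV⟩ := hstep t ht
      refine ⟨swap p.castSucc p.succ * σ, ?_, hV ▸ hσ.bounce hμ (hmass p) hv⟩
      rw [Perm.card_inversions_swap_mul p.castSucc_covBy_succ
        (hσ.symm_castSucc_lt_symm_succ hμ hv), hcard]
  obtain ⟨σ, hcard, -⟩ := key N le_rfl
  simpa [hcard] using σ.card_inversions_le

end Collision

open Function Collision

section ExtendVal

variable {n : ℕ} {α : Type*}

theorem extend_val_apply_of_eq (f : Fin (n + 1) → α) (e : ℕ → α) {j : Fin (n + 1)} {k : ℕ}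
    (h : (j : ℕ) = k) : extend Fin.val f e k = f j :=
  h ▸ Fin.val_injective.extend_apply f e j

theorem extend_val_apply_of_lt (f : Fin (n + 1) → α) (e : ℕ → α) {k : ℕ} (hk : n < k) :
    extend Fin.val f e k = e k :=
  extend_apply' _ _ _ fun ⟨j, hj⟩ => by omega

theorem extend_val_pos {f : Fin (n + 1) → ℝ} (hf : ∀ j, 0 < f j) (k : ℕ) :
    0 < extend Fin.val f 1 k := by
  rcases lt_or_ge n k with hk | hk
  · rw [extend_val_apply_of_lt _ _ hk]
    exact one_pos
  · rw [extend_val_apply_of_eq f 1 (j := ⟨k, by omega⟩) rfl]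
    exact hf _

theorem extend_val_add_le_two_mul {m : Fin (n + 1) → ℝ}
    (hmass : ∀ i : Fin (n + 1), 1 ≤ (i : ℕ) → (i : ℕ) ≤ n - 1 →
      (m (i - 1) + m (i + 1)) / 2 ≤ m i) {p : ℕ} (hp : p + 2 ≤ n) :
    extend Fin.val m 1 p + extend Fin.val m 1 (p + 2) ≤ 2 * extend Fin.val m 1 (p + 1) := by
  let i : Fin (n + 1) := ⟨p + 1, by omega⟩
  have hi_lt : i < Fin.last n := by simp [Fin.lt_def, i]; omega
  have hi := hmass i (by simp [i]) (by simp [i]; omega)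
  rw [extend_val_apply_of_eq m 1 (j := i - 1) (by simp [i, Fin.coe_sub_one]),
    extend_val_apply_of_eq m 1 (j := i + 1) (by rw [Fin.val_add_one_of_lt hi_lt]),
    extend_val_apply_of_eq m 1 (j := i) rfl]
  linarith

theorem extend_collide_succ (m : Fin (n + 1) → ℝ) (p : Fin n) (v : Fin (n + 1) → ℝ) :
    extend Fin.val (collide m p.succ v) 0 =
      bounce (extend Fin.val m 1) p (extend Fin.val v 0) := by
  ext k
  rcases lt_or_ge n k with hk | hk
  · rw [extend_val_apply_of_lt _ _ hk, bounce_apply_of_gt _ (by omega),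
      extend_val_apply_of_lt _ _ hk]
  obtain ⟨j, rfl⟩ : ∃ j : Fin (n + 1), (j : ℕ) = k := ⟨⟨k, by omega⟩, rfl⟩
  have hm : extend Fin.val m 1 p = m p.castSucc := extend_val_apply_of_eq _ _ rfl
  have hm' : extend Fin.val m 1 (p + 1) = m p.succ := extend_val_apply_of_eq _ _ rfl
  have hv : extend Fin.val v 0 p = v p.castSucc := extend_val_apply_of_eq _ _ rfl
  have hv' : extend Fin.val v 0 (p + 1) = v p.succ := extend_val_apply_of_eq _ _ rfl
  rw [Fin.val_injective.extend_apply, collide, bounce, Fin.succ_sub_one, hm, hm', hv, hv']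
  simp only [Fin.ext_iff, Fin.val_castSucc, Fin.val_succ, Fin.val_injective.extend_apply]

theorem exists_bounce_of_collide {m v : Fin (n + 1) → ℝ} {i : Fin (n + 1)}
    (hi : 1 ≤ (i : ℕ)) (hv : v i < v (i - 1)) :
    ∃ p : Fin n, extend Fin.val v 0 (p + 1) < extend Fin.val v 0 p ∧
      extend Fin.val (collide m i v) 0 = bounce (extend Fin.val m 1) p (extend Fin.val v 0) := by
  obtain ⟨p, rfl⟩ := (Fin.exists_succ_eq (x := i)).2 fun h => by simp [h] at hi
  refine ⟨p, ?_, extend_collide_succ m p v⟩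
  rwa [extend_val_apply_of_eq _ _ (j := p.succ) (k := p + 1) rfl,
    extend_val_apply_of_eq _ _ (j := p.castSucc) (k := p) rfl, ← Fin.succ_sub_one]

end ExtendVal

theorem max_collisions_of_arithmetic_mean_condition_general
    (n : ℕ) (m : Fin (n + 1) → ℝ)
    (hm : ∀ i, 0 < m i)
    (hmass : ∀ i : Fin (n + 1), 1 ≤ (i : ℕ) → (i : ℕ) ≤ n - 1 →
      (m (i - 1) + m (i + 1)) / 2 ≤ m i)
    (N : ℕ) (v : ℕ → Fin (n + 1) → ℝ)
    (hstep : ∀ t < N, ∃ i : Fin (n + 1), 1 ≤ (i : ℕ) ∧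
      v t i < v t (i - 1) ∧ v (t + 1) = collide m i (v t)) :
    N ≤ n * (n + 1) / 2 := by
  have h := card_le_choose_of_bounce (extend_val_pos hm)
    (fun _ => extend_val_add_le_two_mul hmass) (fun t => extend Fin.val (v t) 0)
    fun t ht => by
      obtain ⟨i, hi, hv, hV⟩ := hstep t ht
      rw [hV]
      exact exists_bounce_of_collide hi hv
  rwa [Nat.choose_two_right, Nat.add_sub_cancel, mul_comm] at h

/-- If every interior mass is at least the arithmetic mean of the masses of its
immediate neighbors, then any admissible collision sequence of the `n + 1`
hard balls has length at most `n (n + 1) / 2`. -/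
theorem max_collisions_of_arithmetic_mean_condition
    (n : ℕ) (hn : 1 ≤ n) (m : Fin (n + 1) → ℝ)
    (hm : ∀ i, 0 < m i)
    (hmass : ∀ i : Fin (n + 1), 1 ≤ (i : ℕ) → (i : ℕ) ≤ n - 1 →
      (m (i - 1) + m (i + 1)) / 2 ≤ m i)
    (N : ℕ) (v : ℕ → Fin (n + 1) → ℝ)
    (hstep : ∀ t < N, ∃ i : Fin (n + 1), 1 ≤ (i : ℕ) ∧
      v t i < v t (i - 1) ∧ v (t + 1) = collide m i (v t)) :
    N ≤ n * (n + 1) / 2 :=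
  max_collisions_of_arithmetic_mean_condition_general n m hm hmass N v hstep
end

section
/- Let n ≥ 1, let k_{ij} (1 ≤ i,j ≤ n) be real weights extended by k_{i0} = k_{i,n+1} = 0, let p = (p_1,…,p_n) ∈ ℝ^n be a position with potential q = (q_0,…,q_n), and let 1 ≤ i ≤ n. If p' is the position obtained by firing i and q' = (q'_0,…,q'_n) is its potential, then: q'_j = q_j for j ≤ i−2; q'_{i-1} = q_i − p_i(1 − k_{i,i-1}); q'_i = q_{i-1} − p_i(1 − k_{i,i-1}) (when k_{ii} = −2); and q'_j = q_j − p_i(1 − k_{i,i-1} + 1 − k_{i,i+1}) for j ≥ i+1. -/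
/-! Firing `i` adds `p i • k i` to the position, so the potential changes by `p i` times the partial
sums of the row `k i`. That row is supported on `{i - 1, i, i + 1}`, so its partial sums are `0`,
`k i (i - 1)`, `k i (i - 1) - 2` and `k i (i - 1) - 2 + k i (i + 1)`. -/

open Finset

section PartialSums

variable {M : Type*} [AddCommMonoid M]

theorem sum_Icc_one_eq_of_forall_eq_zero (f : ℕ → M) {a b : ℕ} (hab : a ≤ b)
    (h : ∀ l, a < l → l ≤ b → f l = 0) :
    ∑ l ∈ Icc 1 b, f l = ∑ l ∈ Icc 1 a, f l := by
  refine (sum_subset (Icc_subset_Icc le_rfl hab) fun l hlb hla => ?_).symm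
  simp only [mem_Icc] at hlb hla
  exact h l (by omega) hlb.2

theorem sum_Icc_one_pred_add (f : ℕ → M) {i : ℕ} (hi : 1 ≤ i) :
    ∑ l ∈ Icc 1 (i - 1), f l + f i = ∑ l ∈ Icc 1 i, f l := by
  obtain ⟨m, rfl⟩ := Nat.exists_eq_add_of_le' hi
  rw [Nat.add_sub_cancel, sum_Icc_succ_top (Nat.le_add_left 1 m)]

/-- The row `r` of a tridiagonal `n × n` matrix whose diagonal entry sits in column `i`. -/
def IsTridiagonalRow (n i : ℕ) (r : ℕ → M) : Prop :=
  ∀ j, 1 ≤ j → j ≤ n → (i + 1 < j ∨ j + 1 < i) → r j = 0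

namespace IsTridiagonalRow

variable {n i : ℕ} {r : ℕ → M}

theorem sum_Icc_one_of_add_two_le (hr : IsTridiagonalRow n i r) (hi : i ≤ n) {j : ℕ}
    (hj : j + 2 ≤ i) : ∑ l ∈ Icc 1 j, r l = 0 := by
  rw [sum_Icc_one_eq_of_forall_eq_zero r (Nat.zero_le j)
    fun l hl hlj => hr l hl (by omega) (Or.inr (by omega))]
  rfl

theorem sum_Icc_one_pred (hr : IsTridiagonalRow n i r) (hi : i ≤ n) (h0 : r 0 = 0) :
    ∑ l ∈ Icc 1 (i - 1), r l = r (i - 1) := by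
  rcases i with _ | _ | m
  · exact h0.symm
  · exact h0.symm
  · rw [show m + 2 - 1 = m + 1 from rfl, sum_Icc_succ_top (Nat.le_add_left 1 m),
      hr.sum_Icc_one_of_add_two_le hi le_rfl, zero_add]

theorem sum_Icc_one_self (hr : IsTridiagonalRow n i r) (hi : i ≤ n) (h0 : r 0 = 0)
    (hi1 : 1 ≤ i) : ∑ l ∈ Icc 1 i, r l = r (i - 1) + r i := by
  rw [← sum_Icc_one_pred_add r hi1, hr.sum_Icc_one_pred hi h0]

theorem sum_Icc_one_of_lt (hr : IsTridiagonalRow n i r) (h0 : r 0 = 0) (hi1 : 1 ≤ i)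
    {j : ℕ} (hij : i + 1 ≤ j) (hj : j ≤ n) :
    ∑ l ∈ Icc 1 j, r l = r (i - 1) + r i + r (i + 1) := by
  rw [sum_Icc_one_eq_of_forall_eq_zero r hij
      fun l hl hlj => hr l (by omega) (hlj.trans hj) (Or.inl hl),
    sum_Icc_succ_top (by omega), hr.sum_Icc_one_self (by omega) h0 hi1]

end IsTridiagonalRow

end PartialSums

theorem potential_after_firing_general
    (n : ℕ) (k : ℕ → ℕ → ℝ) (p : ℕ → ℝ)
    (i : ℕ) (hi1 : 1 ≤ i) (hi2 : i ≤ n)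
    (hdiag : k i i = -2)
    (hfar : ∀ j, 1 ≤ j → j ≤ n → (i + 1 < j ∨ j + 1 < i) → k i j = 0)
    (hext0 : k i 0 = 0) :
    (∀ j, j + 2 ≤ i →
        ∑ l ∈ Finset.Icc 1 j, (p l + p i * k i l) = ∑ l ∈ Finset.Icc 1 j, p l) ∧
    (∑ l ∈ Finset.Icc 1 (i - 1), (p l + p i * k i l) =
        (∑ l ∈ Finset.Icc 1 i, p l) - p i * (1 - k i (i - 1))) ∧
    (∑ l ∈ Finset.Icc 1 i, (p l + p i * k i l) =
        (∑ l ∈ Finset.Icc 1 (i - 1), p l) - p i * (1 - k i (i - 1))) ∧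
    (∀ j, i + 1 ≤ j → j ≤ n →
        ∑ l ∈ Finset.Icc 1 j, (p l + p i * k i l) =
          (∑ l ∈ Finset.Icc 1 j, p l) - p i * (1 - k i (i - 1) + (1 - k i (i + 1)))) := by
  have hrow : IsTridiagonalRow n i (k i) := hfar
  have fire : ∀ j, ∑ l ∈ Icc 1 j, (p l + p i * k i l) =
      ∑ l ∈ Icc 1 j, p l + p i * ∑ l ∈ Icc 1 j, k i l := fun j => by
    rw [sum_add_distrib, mul_sum]
  have hq := sum_Icc_one_pred_add p hi1
  refine ⟨fun j hj => ?_, ?_, ?_, fun j hij hj => ?_⟩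
  · rw [fire, hrow.sum_Icc_one_of_add_two_le hi2 hj, mul_zero, add_zero]
  · rw [fire, hrow.sum_Icc_one_pred hi2 hext0, ← hq]
    ring
  · rw [fire, hrow.sum_Icc_one_self hi2 hext0 hi1, hdiag, ← hq]
    ring
  · rw [fire, hrow.sum_Icc_one_of_lt hext0 hi1 hij hj, hdiag]
    ring

/-- Explicit formulas for the potential `q' a = p' 1 + ⋯ + p' a` of the position
obtained by firing index `i` (replacing each `p j` by `p j + p i * k i j`),
in terms of the potential `q a = p 1 + ⋯ + p a` of the original position,
where `k i i = -2`, `k i j = 0` for `|i - j| > 1`, and `k i 0 = k i (n+1) = 0`. -/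
theorem potential_after_firing
    (n : ℕ) (hn : 1 ≤ n) (k : ℕ → ℕ → ℝ) (p : ℕ → ℝ)
    (i : ℕ) (hi1 : 1 ≤ i) (hi2 : i ≤ n)
    (hdiag : k i i = -2)
    (hfar : ∀ j, 1 ≤ j → j ≤ n → (i + 1 < j ∨ j + 1 < i) → k i j = 0)
    (hext0 : k i 0 = 0) (hextn : k i (n + 1) = 0) :
    (∀ j, j + 2 ≤ i →
        ∑ l ∈ Finset.Icc 1 j, (p l + p i * k i l) = ∑ l ∈ Finset.Icc 1 j, p l) ∧
    (∑ l ∈ Finset.Icc 1 (i - 1), (p l + p i * k i l) =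
        (∑ l ∈ Finset.Icc 1 i, p l) - p i * (1 - k i (i - 1))) ∧
    (∑ l ∈ Finset.Icc 1 i, (p l + p i * k i l) =
        (∑ l ∈ Finset.Icc 1 (i - 1), p l) - p i * (1 - k i (i - 1))) ∧
    (∀ j, i + 1 ≤ j → j ≤ n →
        ∑ l ∈ Finset.Icc 1 j, (p l + p i * k i l) =
          (∑ l ∈ Finset.Icc 1 j, p l) - p i * (1 - k i (i - 1) + (1 - k i (i + 1)))) :=
  potential_after_firing_general n k p i hi1 hi2 hdiag hfar hext0
end

section
/- Let n ≥ 1, m_0, …, m_n be positive reals, v_0, …, v_n ∈ ℝ, and 1 ≤ i ≤ n. Let (v'_0,…,v'_n) be obtained from (v_0,…,v_n) by the elastic collision between balls i−1 and i. Then the reflection σ_i realizes the collision: σ_i(Σ_{j=0}^n √(m_j) v_j 1_j) = Σ_{j=0}^n √(m_j) v'_j 1_j. -/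
open scoped RealInnerProductSpace

/-- The (unnormalized) vector `1_i / √(m i) - 1_{i-1} / √(m (i-1))`. -/
noncomputable def uvec {n : ℕ} (m : Fin (n + 1) → ℝ) (i : Fin (n + 1)) :
    EuclideanSpace ℝ (Fin (n + 1)) :=
  EuclideanSpace.single i (Real.sqrt (m i))⁻¹ -
    EuclideanSpace.single (i - 1) (Real.sqrt (m (i - 1)))⁻¹

/-- The unit vector `α i` obtained by normalizing `1_i / √(m i) - 1_{i-1} / √(m (i-1))`. -/
noncomputable def alpha {n : ℕ} (m : Fin (n + 1) → ℝ) (i : Fin (n + 1)) :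
    EuclideanSpace ℝ (Fin (n + 1)) :=
  ‖uvec m i‖⁻¹ • uvec m i

/-- The orthogonal reflection with unit normal `a`: `σ(β) = β - 2 (a, β) a`. -/
noncomputable def reflectIn {n : ℕ} (a β : EuclideanSpace ℝ (Fin (n + 1))) :
    EuclideanSpace ℝ (Fin (n + 1)) :=
  β - (2 * ⟪a, β⟫) • a

/-- The velocity vector `𝐯 = Σ_j √(m j) v j 1_j`. -/
noncomputable def vvec {n : ℕ} (m v : Fin (n + 1) → ℝ) :
    EuclideanSpace ℝ (Fin (n + 1)) :=
  ∑ j : Fin (n + 1), EuclideanSpace.single j (Real.sqrt (m j) * v j)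

/-!
Let `u = 1_i/√m_i - 1_{i-1}/√m_{i-1}`, so `σ_i β = β - (2 (u, β) / ‖u‖²) u`. In the mass-weighted
coordinates `𝐯 = Σ √m_j v_j 1_j`, the vector `u` is the image of the velocity change caused by
passing one unit of momentum from ball `i - 1` to ball `i`, while `(u, 𝐯) = v_i - v_{i-1}` and
`‖u‖² = 1/m_i + 1/m_{i-1}`. So `σ_i` passes the momentum `2 (v_{i-1} - v_i) / (1/m_i + 1/m_{i-1})` from ball `i - 1` to
ball `i`, which is exactly what the elastic collision does.
-/

section Collision

variable {n : ℕ} (m : Fin (n + 1) → ℝ) (i : Fin (n + 1))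

theorem reflectIn_inv_norm_smul (u β : EuclideanSpace ℝ (Fin (n + 1))) :
    reflectIn (‖u‖⁻¹ • u) β = β - (2 * ⟪u, β⟫ / ‖u‖ ^ 2) • u := by
  rw [reflectIn, real_inner_smul_left, smul_smul]
  congr 2
  ring

@[simp]
theorem vvec_apply (v : Fin (n + 1) → ℝ) (j : Fin (n + 1)) :
    vvec m v j = Real.sqrt (m j) * v j := by
  simp [vvec]

theorem vvec_sub (v w : Fin (n + 1) → ℝ) : vvec m (v - w) = vvec m v - vvec m w := by
  ext j
  simp [mul_sub]

theorem vvec_smul (c : ℝ) (v : Fin (n + 1) → ℝ) : vvec m (c • v) = c • vvec m v := by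
  ext j
  simp [mul_left_comm]

theorem vvec_single (k : Fin (n + 1)) (a : ℝ) :
    vvec m (Pi.single k a) = EuclideanSpace.single k (Real.sqrt (m k) * a) := by
  ext j
  by_cases hj : j = k
  · subst hj; simp
  · simp [hj]

/-- The change of velocities when ball `i - 1` passes one unit of momentum to ball `i`. -/
noncomputable def kick : Fin (n + 1) → ℝ :=
  Pi.single i (m i)⁻¹ - Pi.single (i - 1) (m (i - 1))⁻¹

theorem uvec_eq_vvec_kick : uvec m i = vvec m (kick m i) := by
  simp only [uvec, kick, vvec_sub, vvec_single, ← div_eq_mul_inv, Real.sqrt_div_self]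

theorem inner_uvec_vvec (hi : 0 < m i) (hi' : 0 < m (i - 1)) (v : Fin (n + 1) → ℝ) :
    ⟪uvec m i, vvec m v⟫ = v i - v (i - 1) := by
  simp only [uvec, inner_sub_left, EuclideanSpace.inner_single_left, vvec_apply, conj_trivial,
    inv_mul_cancel_left₀ (Real.sqrt_pos.2 hi).ne', inv_mul_cancel_left₀ (Real.sqrt_pos.2 hi').ne']

theorem norm_uvec_sq (hi : 0 < m i) (hi' : 0 < m (i - 1)) (hne : i - 1 ≠ i) :
    ‖uvec m i‖ ^ 2 = (m i)⁻¹ + (m (i - 1))⁻¹ := by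
  rw [← real_inner_self_eq_norm_sq]
  nth_rewrite 2 [uvec_eq_vvec_kick]
  rw [inner_uvec_vvec m i hi hi']
  simp [kick, hne, hne.symm]

theorem collide_eq_sub_smul_kick (hi : 0 < m i) (hi' : 0 < m (i - 1)) (hne : i - 1 ≠ i)
    (v : Fin (n + 1) → ℝ) :
    collide m i v = v - (2 * (v i - v (i - 1)) / ((m i)⁻¹ + (m (i - 1))⁻¹)) • kick m i := by
  have hsum := (add_pos hi' hi).ne'
  have hmi := hi.ne'
  have hmi' := hi'.ne'
  ext j
  rcases eq_or_ne j (i - 1) with rfl | hj'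
  · simp only [collide, kick, ↓reduceIte, Pi.sub_apply, Pi.smul_apply, smul_eq_mul,
      Pi.single_eq_same, Pi.single_eq_of_ne hne]
    field_simp
    ring
  rcases eq_or_ne j i with rfl | hj
  · simp only [collide, kick, if_neg hj', ↓reduceIte, Pi.sub_apply, Pi.smul_apply, smul_eq_mul,
      Pi.single_eq_same, Pi.single_eq_of_ne hj']
    field_simp
    ring
  · simp [collide, kick, hj, hj']

end Collision

theorem reflection_realizes_collision_general
    (n : ℕ) (hn : 1 ≤ n) (m : Fin (n + 1) → ℝ) (hm : ∀ i, 0 < m i)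
    (v : Fin (n + 1) → ℝ) (i : Fin (n + 1)) :
    reflectIn (alpha m i) (vvec m v) = vvec m (collide m i v) := by
  have hne : i - 1 ≠ i := sub_eq_self.not.2 (by rw [Fin.one_eq_zero_iff]; omega)
  rw [alpha, reflectIn_inv_norm_smul, inner_uvec_vvec m i (hm i) (hm _),
    norm_uvec_sq m i (hm i) (hm _) hne, collide_eq_sub_smul_kick m i (hm i) (hm _) hne,
    vvec_sub, vvec_smul, uvec_eq_vvec_kick]

/-- The reflection `σ i` realizes the elastic collision between balls `i - 1` and `i`:
`σ i (Σ_j √(m j) v j 1_j) = Σ_j √(m j) v' j 1_j`. -/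
theorem reflection_realizes_collision
    (n : ℕ) (hn : 1 ≤ n) (m : Fin (n + 1) → ℝ) (hm : ∀ i, 0 < m i)
    (v : Fin (n + 1) → ℝ) (i : Fin (n + 1)) (hi : 1 ≤ (i : ℕ)) :
    reflectIn (alpha m i) (vvec m v) = vvec m (collide m i v) :=
  reflection_realizes_collision_general n hn m hm v i
end
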